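/- Let Y be a poset, B the set of two-element comparable subsets of Y, and Ω the set of sections σ : B → Y (σ(b) ∈ b) with the pointwise partial order. Suppose y₁, y₂ ∈ Y are comparable, and suppose there are sections σ₁ ≤ σ₂ and σ₂' ≤ σ₁' in Ω such that σ₁ and σ₁' are y₁-avoiding while σ₂ and σ₂' are y₂-avoiding. Then y₁ = y₂. -/

import Mathlib

/-- Two elements of a poset are comparable. -/
def Cmp {Y : Type*} [PartialOrder Y] (y y' : Y) : Prop := y ≤ y' ∨ y' ≤ y

/-- A section of the set `B` of two-element comparable subsets of `Y`,
encoded as a symmetric function choosing one element of each such pair. -/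
def IsSection {Y : Type*} [PartialOrder Y] (σ : Y → Y → Y) : Prop :=
  (∀ y y', σ y y' = σ y' y) ∧
  ∀ y y', y ≠ y' → Cmp y y' → σ y y' = y ∨ σ y y' = y'

/-- A section is `z`-avoiding if it never chooses `z` from a pair containing `z`. -/
def Avoiding {Y : Type*} [PartialOrder Y] (σ : Y → Y → Y) (z : Y) : Prop :=
  ∀ y, y ≠ z → Cmp z y → σ z y ≠ z

/-- The pointwise order on sections: `σ ≤ σ'` iff `σ(b) ≤ σ'(b)` for all `b ∈ B`. -/
def SecLE {Y : Type*} [PartialOrder Y] (σ σ' : Y → Y → Y) : Prop :=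
  ∀ y y', y ≠ y' → Cmp y y' → σ y y' ≤ σ' y y'

section

variable {Y : Type*} [PartialOrder Y] {σ σ' : Y → Y → Y} {y z : Y}

theorem Avoiding.apply_eq (hσ : IsSection σ) (h : Avoiding σ z) (hyz : y ≠ z) (hzy : Cmp z y) :
    σ z y = y :=
  (hσ.2 z y hyz.symm hzy).resolve_left (h y hyz hzy)

theorem SecLE.le_of_avoiding (hle : SecLE σ σ') (hσ : IsSection σ) (hσ' : IsSection σ')
    (h : Avoiding σ z) (h' : Avoiding σ' y) (hne : z ≠ y) (hcmp : Cmp z y) : y ≤ z := by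
  have hpair := hle z y hne hcmp
  rwa [h.apply_eq hσ hne.symm hcmp, hσ'.1, h'.apply_eq hσ' hne hcmp.symm] at hpair

end

/-- Four-section lemma: if `σ₁ ≤ σ₂` and `σ₂' ≤ σ₁'` with `σ₁, σ₁'`
`y₁`-avoiding and `σ₂, σ₂'` `y₂`-avoiding, where `y₁, y₂` are comparable,
then `y₁ = y₂`. -/
theorem avoiding_four_sections {Y : Type*} [PartialOrder Y]
    {A B C D : Y → Y → Y}
    (hA : IsSection A) (hB : IsSection B) (hC : IsSection C) (hD : IsSection D)
    {y₁ y₂ : Y} (hcmp : Cmp y₁ y₂)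
    (haA : Avoiding A y₁) (haB : Avoiding B y₁)
    (haC : Avoiding C y₂) (haD : Avoiding D y₂)
    (hAC : SecLE A C) (hDB : SecLE D B) : y₁ = y₂ := by
  by_contra hne
  exact hne <| le_antisymm (hDB.le_of_avoiding hD hB haD haB (Ne.symm hne) hcmp.symm)
    (hAC.le_of_avoiding hA hC haA haC hne hcmp)
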